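/- Let ρ₁, …, ρ_m be density matrices with cores ρ̃_1, …, ρ̃_m and ρ̃_0 = Σ_i ρ̂_i. Then the sum of the supports Σ_{i=1}^m supp(ρ_i) decomposes as the (internal) direct sum ⊕_{i=0}^m supp(ρ̃_i). -/

import Mathlib

open Matrix BigOperators ComplexOrder

/-- Support of a matrix (for a PSD matrix, the orthocomplement of its kernel). -/
noncomputable def supp {n : ℕ} (A : Matrix (Fin n) (Fin n) ℂ) : Submodule ℂ (Fin n → ℂ) :=
  LinearMap.range A.mulVecLin

section helpers

variable {n : ℕ}

lemma herm_dot {M : Matrix (Fin n) (Fin n) ℂ} (hM : M.IsHermitian) (x y : Fin n → ℂ) :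
    star x ⬝ᵥ (M *ᵥ y) = star (M *ᵥ x) ⬝ᵥ y := by
  rw [star_mulVec, hM.eq, dotProduct_mulVec]

lemma ker_add_le_ker {A B : Matrix (Fin n) (Fin n) ℂ}
    (hA : A.PosSemidef) (hB : B.PosSemidef) :
    LinearMap.ker (A + B).mulVecLin ≤ LinearMap.ker A.mulVecLin := by
  intro x hx
  have hx' : (A + B) *ᵥ x = 0 := hx
  have h0 : star x ⬝ᵥ (A *ᵥ x) + star x ⬝ᵥ (B *ᵥ x) = 0 := by
    rw [← dotProduct_add, ← add_mulVec, hx', dotProduct_zero]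
  have ha := hA.dotProduct_mulVec_nonneg x
  have hb := hB.dotProduct_mulVec_nonneg x
  have hAx : star x ⬝ᵥ (A *ᵥ x) = 0 := by
    have : star x ⬝ᵥ (A *ᵥ x) = -(star x ⬝ᵥ (B *ᵥ x)) := eq_neg_of_add_eq_zero_left h0
    exact le_antisymm (this ▸ neg_nonpos.mpr hb) ha
  have : A *ᵥ x = 0 := (hA.dotProduct_mulVec_zero_iff x).mp hAx
  exact this

lemma supp_disjoint_ker {M : Matrix (Fin n) (Fin n) ℂ} (hM : M.IsHermitian) :
    Disjoint (supp M) (LinearMap.ker M.mulVecLin) := by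
  rw [Submodule.disjoint_def]
  rintro x ⟨y, rfl⟩ hk
  have hk' : M *ᵥ (M *ᵥ y) = 0 := hk
  have h0 : star (M *ᵥ y) ⬝ᵥ (M *ᵥ y) = 0 := by
    rw [← herm_dot hM, hk', dotProduct_zero]
  exact dotProduct_star_self_eq_zero.mp h0

lemma supp_sup_ker {M : Matrix (Fin n) (Fin n) ℂ} (hM : M.IsHermitian) :
    supp M ⊔ LinearMap.ker M.mulVecLin = ⊤ := by
  apply Submodule.eq_top_of_finrank_eq
  have h1 := Submodule.finrank_sup_add_finrank_inf_eq (supp M) (LinearMap.ker M.mulVecLin)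
  rw [(supp_disjoint_ker hM).eq_bot, finrank_bot, add_zero] at h1
  rw [h1]
  have := LinearMap.finrank_range_add_finrank_ker M.mulVecLin
  exact this

lemma add_mem_sup {A B : Matrix (Fin n) (Fin n) ℂ} :
    supp (A + B) ≤ supp A ⊔ supp B := by
  rintro x ⟨y, rfl⟩
  exact Submodule.mem_sup.mpr ⟨A *ᵥ y, ⟨y, rfl⟩, B *ᵥ y, ⟨y, rfl⟩, (add_mulVec A B y).symm⟩

lemma supp_le_supp_add {A B : Matrix (Fin n) (Fin n) ℂ}
    (hA : A.PosSemidef) (hB : B.PosSemidef) :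
    supp A ≤ supp (A + B) := by
  intro x hx
  have hAB : (A + B).PosSemidef := hA.add hB
  have htop := supp_sup_ker hAB.1
  have hx' : x ∈ supp (A + B) ⊔ LinearMap.ker (A + B).mulVecLin := htop ▸ Submodule.mem_top
  obtain ⟨u, hu, v, hv, rfl⟩ := Submodule.mem_sup.mp hx'
  -- show v = 0
  have hvA : A *ᵥ v = 0 := ker_add_le_ker hA hB hv
  have hvB : B *ᵥ v = 0 := by
    have := ker_add_le_ker hB hA (by rwa [add_comm] at hv)
    exact this
  have hvmem : v ∈ supp A ⊔ supp B := by
    have hxm : u + v - u ∈ supp A ⊔ supp B := by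
      refine Submodule.sub_mem _ ?_ ?_
      · exact Submodule.mem_sup_left hx
      · exact add_mem_sup hu
    simpa using hxm
  obtain ⟨a, ⟨p, rfl⟩, b, ⟨q, rfl⟩, hab⟩ := Submodule.mem_sup.mp hvmem
  have h0 : star v ⬝ᵥ v = 0 := by
    have h1 : star v ⬝ᵥ (A.mulVecLin p + B.mulVecLin q) = 0 := by
      simp only [Matrix.mulVecLin_apply, dotProduct_add, herm_dot hA.1 v p,
        herm_dot hB.1 v q, hvA, hvB, star_zero, zero_dotProduct, add_zero]
    rwa [hab] at h1
  have hv0 : v = 0 := dotProduct_star_self_eq_zero.mp h0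
  simpa [hv0] using hu

lemma supp_add {A B : Matrix (Fin n) (Fin n) ℂ}
    (hA : A.PosSemidef) (hB : B.PosSemidef) :
    supp (A + B) = supp A ⊔ supp B := by
  refine le_antisymm add_mem_sup (sup_le (supp_le_supp_add hA hB) ?_)
  have := supp_le_supp_add hB hA
  rwa [add_comm] at this

lemma supp_zero : supp (0 : Matrix (Fin n) (Fin n) ℂ) = ⊥ := by
  simp [supp]

lemma supp_sum {ι : Type*} (s : Finset ι) (A : ι → Matrix (Fin n) (Fin n) ℂ)
    (hA : ∀ i ∈ s, (A i).PosSemidef) :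
    supp (∑ i ∈ s, A i) = ⨆ i ∈ s, supp (A i) := by
  classical
  induction s using Finset.induction_on with
  | empty => simp [supp_zero]
  | @insert a s ha ih =>
    rw [Finset.sum_insert ha, supp_add (hA a (Finset.mem_insert_self a s))
      (Finset.sum_induction _ _ (fun x y hx hy => hx.add hy) Matrix.PosSemidef.zero
        (fun i hi => hA i (Finset.mem_insert_of_mem hi))),
      ih (fun i hi => hA i (Finset.mem_insert_of_mem hi))]
    exact (Finset.iSup_insert a s fun i => supp (A i)).symm

end helpers

theorem stmt_12 {n m : ℕ}
    (ρ : Fin m → Matrix (Fin n) (Fin n) ℂ) (hρ : ∀ i, (ρ i).PosSemidef)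
    (ρhat ρtil : Fin m → Matrix (Fin n) (Fin n) ℂ)
    (hhat : ∀ i, (ρhat i).PosSemidef) (htil : ∀ i, (ρtil i).PosSemidef)
    (hdecomp : ∀ i, ρhat i + ρtil i = ρ i)
    (hsupphat : ∀ i, supp (ρhat i) =
      supp (ρ i) ⊓ ⨆ j ∈ Finset.univ \ {i}, supp (ρ j))
    (hsupptil : ∀ i, supp (ρtil i) ⊓
      (supp (ρ i) ⊓ ⨆ j ∈ Finset.univ \ {i}, supp (ρ j)) = ⊥)
    (ρt : Fin (m + 1) → Matrix (Fin n) (Fin n) ℂ)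
    (hρt0 : ρt 0 = ∑ i, ρhat i) (hρts : ∀ i : Fin m, ρt i.succ = ρtil i) :
    iSupIndep (fun i : Fin (m + 1) => supp (ρt i)) ∧
    (⨆ i, supp (ρ i)) = ⨆ i : Fin (m + 1), supp (ρt i) := by
  classical
  have hST : ∀ i, supp (ρ i) = supp (ρhat i) ⊔ supp (ρtil i) := fun i => by
    rw [← hdecomp i, supp_add (hhat i) (htil i)]
  have hTle : ∀ i, supp (ρtil i) ≤ supp (ρ i) := fun i => (hST i) ▸ le_sup_right
  have hHle : ∀ i, supp (ρhat i) ≤ supp (ρ i) := fun i => (hST i) ▸ le_sup_left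
  set W : Fin m → Submodule ℂ (Fin n → ℂ) :=
    fun i => ⨆ j ∈ Finset.univ \ {i}, supp (ρ j) with hW
  have hSW : ∀ {j i : Fin m}, j ≠ i → supp (ρ j) ≤ W i := by
    intro j i hji
    exact le_iSup_of_le j (le_iSup_of_le (by simp [hji]) le_rfl)
  have hHW : ∀ j i, supp (ρhat j) ≤ W i := by
    intro j i
    by_cases hji : j = i
    · subst hji
      rw [hsupphat j]; exact inf_le_right
    · exact (hHle j).trans (hSW hji)
  have hTW : ∀ j i, j ≠ i → supp (ρtil j) ≤ W i := fun j i h => (hTle j).trans (hSW h)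
  have hkey : ∀ i, supp (ρtil i) ⊓ W i = ⊥ := by
    intro i
    have h1 : supp (ρtil i) ⊓ W i ≤ supp (ρtil i) ⊓ (supp (ρ i) ⊓ W i) :=
      le_inf inf_le_left (le_inf (inf_le_left.trans (hTle i)) inf_le_right)
    exact le_bot_iff.mp ((hsupptil i) ▸ h1)
  have hT0 : supp (ρt 0) = ⨆ j, supp (ρhat j) := by
    rw [hρt0, supp_sum Finset.univ ρhat (fun i _ => hhat i)]
    simp
  have hT0W : ∀ i, supp (ρt 0) ≤ W i := by
    intro i; rw [hT0]; exact iSup_le fun j => hHW j i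
  constructor
  · intro k
    refine Fin.cases ?_ ?_ k
    · -- k = 0
      have hle : (⨆ j, ⨆ (_ : j ≠ (0 : Fin (m+1))), supp (ρt j)) ≤
          ⨆ i : Fin m, supp (ρtil i) := by
        refine iSup_le fun j => iSup_le fun hj => ?_
        obtain ⟨l, rfl⟩ := Fin.exists_succ_eq_of_ne_zero hj
        rw [hρts l]
        exact le_iSup (fun l : Fin m => supp (ρtil l)) l
      refine Disjoint.mono_right hle ?_
      rw [Submodule.disjoint_def]
      intro x hx0 hxT
      obtain ⟨f, hf, hfx⟩ := (Submodule.mem_iSup_iff_exists_finsupp _ x).mp hxT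
      have hxsum : x = ∑ j, f j := by
        rw [← hfx, Finsupp.sum]
        exact Finset.sum_subset (Finset.subset_univ _)
          (fun j _ hj => Finsupp.notMem_support_iff.mp hj)
      have hfi : ∀ i, f i = 0 := by
        intro i
        have h3 : f i + ∑ j ∈ Finset.univ.erase i, f j = x := by
          rw [Finset.add_sum_erase _ _ (Finset.mem_univ i), ← hxsum]
        have h2 : f i = x - ∑ j ∈ Finset.univ.erase i, f j := eq_sub_of_add_eq h3
        have hmem : f i ∈ supp (ρtil i) ⊓ W i := by
          refine ⟨hf i, ?_⟩
          rw [h2]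
          refine Submodule.sub_mem _ (hT0W i hx0) (Submodule.sum_mem _ ?_)
          intro j hj
          exact hTW j i (Finset.ne_of_mem_erase hj) (hf j)
        rw [hkey i] at hmem
        exact (Submodule.mem_bot ℂ).mp hmem
      rw [hxsum]
      simp [hfi]
    · -- k = i.succ
      intro i
      have hle : (⨆ j, ⨆ (_ : j ≠ i.succ), supp (ρt j)) ≤ W i := by
        refine iSup_le fun j => iSup_le fun hj => ?_
        rcases eq_or_ne j 0 with rfl | hj0
        · exact hT0W i
        · obtain ⟨l, rfl⟩ := Fin.exists_succ_eq_of_ne_zero hj0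
          rw [hρts l]
          exact hTW l i fun h => hj (by rw [h])
      refine Disjoint.mono_right hle ?_
      show Disjoint (supp (ρt i.succ)) (W i)
      rw [hρts i, disjoint_iff, hkey i]
  · apply le_antisymm
    · refine iSup_le fun i => ?_
      rw [hST i]
      apply sup_le
      · have h1 : supp (ρhat i) ≤ supp (ρt 0) := hT0 ▸ le_iSup (fun j => supp (ρhat j)) i
        exact h1.trans (le_iSup (fun k => supp (ρt k)) 0)
      · calc supp (ρtil i) = supp (ρt i.succ) := by rw [hρts i]
          _ ≤ _ := le_iSup (fun k => supp (ρt k)) i.succ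
    · refine iSup_le fun k => ?_
      refine Fin.cases ?_ ?_ k
      · rw [hT0]
        exact iSup_le fun j => (hHle j).trans (le_iSup (fun j : Fin m => supp (ρ j)) j)
      · intro i
        rw [hρts i]
        exact (hTle i).trans (le_iSup (fun j : Fin m => supp (ρ j)) i)
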